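/- arXiv:math/0107132 — 7 statements merged into one kernel-verified Lean document; each statement's English description precedes it below -/
import Mathlib

section
/- A nonzero Banach space X has the Daugavet property if and only if for every x in the unit sphere S(X), every continuous linear functional x* with ‖x*‖ = 1 and every ε > 0 there exists y ∈ S(X) such that x*(y) ≥ 1 − ε and ‖x + y‖ ≥ 2 − ε. -/
open ContinuousLinearMap

set_option maxHeartbeats 1600000 in
/-- A nonzero Banach space `X` has the Daugavet property iff every rank-one operator
`z ↦ f z • y` (with `f ≠ 0`, `y ≠ 0`) satisfies `‖Id + T‖ = 1 + ‖T‖`; this is equivalent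
to: for every `x` in the unit sphere, every norm-one functional `f` and every `ε > 0`
there is `y` in the unit sphere with `f y ≥ 1 - ε` and `‖x + y‖ ≥ 2 - ε`. -/
theorem daugavetProperty_iff_sphere_criterion
    {X : Type*} [NormedAddCommGroup X] [NormedSpace ℝ X] [CompleteSpace X] [Nontrivial X] :
    (∀ (f : X →L[ℝ] ℝ) (y : X), f ≠ 0 → y ≠ 0 →
        ‖ContinuousLinearMap.id ℝ X + f.smulRight y‖ = 1 + ‖f.smulRight y‖) ↔
    (∀ x : X, ‖x‖ = 1 → ∀ f : X →L[ℝ] ℝ, ‖f‖ = 1 → ∀ ε : ℝ, 0 < ε →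
        ∃ y : X, ‖y‖ = 1 ∧ 1 - ε ≤ f y ∧ 2 - ε ≤ ‖x + y‖) := by
  constructor
  · -- Daugavet ⇒ sphere criterion
    intro hD x hx f hf ε hε
    set δ : ℝ := min (ε / 3) (1 / 2) with hδdef
    have hδpos : 0 < δ := lt_min (by linarith) (by norm_num)
    have hδhalf : δ ≤ 1 / 2 := min_le_right _ _
    have hδε : 3 * δ ≤ ε := by
      have := min_le_left (ε / 3) (1 / 2)
      linarith
    have hfne : f ≠ 0 := by
      intro h; rw [h, norm_zero] at hf; norm_num at hf
    have hxne : x ≠ 0 := by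
      intro h; rw [h, norm_zero] at hx; norm_num at hx
    have hT : ‖f.smulRight x‖ = 1 := by
      rw [norm_smulRight_apply, hf, hx, one_mul]
    have h2 : (2 : ℝ) - δ < ‖ContinuousLinearMap.id ℝ X + f.smulRight x‖ := by
      rw [hD f x hfne hxne, hT]; linarith
    obtain ⟨z₀, hz₀1, hz₀2⟩ :=
      (ContinuousLinearMap.id ℝ X + f.smulRight x).exists_lt_apply_of_lt_opNorm h2
    have happ : ∀ w : X, (ContinuousLinearMap.id ℝ X + f.smulRight x) w = w + f w • x := by
      intro w; simp [ContinuousLinearMap.add_apply]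
    obtain ⟨z, hz1, hzf, hz2⟩ :
        ∃ z : X, ‖z‖ ≤ 1 ∧ 0 ≤ f z ∧ 2 - δ < ‖z + f z • x‖ := by
      rcases le_or_gt 0 (f z₀) with h | h
      · exact ⟨z₀, hz₀1.le, h, by rw [happ] at hz₀2; exact hz₀2⟩
      · refine ⟨-z₀, by simpa using hz₀1.le, by simp; linarith, ?_⟩
        have heq : (-z₀) + f (-z₀) • x = -(z₀ + f z₀ • x) := by
          simp [neg_smul]; abel
        rw [heq, norm_neg]
        rw [happ] at hz₀2; exact hz₀2
    -- basic estimates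
    have hfz_le : f z ≤ 1 := by
      have h1 : f z ≤ |f z| := le_abs_self _
      have h2' : |f z| ≤ ‖f‖ * ‖z‖ := f.le_opNorm z
      rw [hf, one_mul] at h2'
      linarith
    have htri : ‖z + f z • x‖ ≤ ‖z‖ + f z := by
      calc ‖z + f z • x‖ ≤ ‖z‖ + ‖f z • x‖ := norm_add_le _ _
        _ = ‖z‖ + f z := by rw [norm_smul, hx, mul_one, Real.norm_eq_abs, abs_of_nonneg hzf]
    have hfz_lt : 1 - δ < f z := by linarith
    have hznorm : 1 - δ < ‖z‖ := by linarith
    have hzpos : 0 < ‖z‖ := by linarith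
    have hzne : z ≠ 0 := norm_pos_iff.mp hzpos
    refine ⟨‖z‖⁻¹ • z, ?_, ?_, ?_⟩
    · rw [norm_smul, norm_inv, norm_norm, inv_mul_cancel₀ (ne_of_gt hzpos)]
    · have : f (‖z‖⁻¹ • z) = ‖z‖⁻¹ * f z := by rw [map_smul, smul_eq_mul]
      rw [this]
      have hinv : 1 ≤ ‖z‖⁻¹ := (one_le_inv_iff₀).mpr ⟨hzpos, hz1⟩
      nlinarith
    · have hxz : 2 - 2 * δ < ‖x + z‖ := by
        have heq : z + f z • x = (x + z) + (f z - 1) • x := by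
          simp [sub_smul]; abel
        have h1 : ‖z + f z • x‖ ≤ ‖x + z‖ + ‖(f z - 1) • x‖ := by
          rw [heq]; exact norm_add_le _ _
        have h2' : ‖(f z - 1) • x‖ = 1 - f z := by
          rw [norm_smul, hx, mul_one, Real.norm_eq_abs, abs_of_nonpos (by linarith)]
          ring
        rw [h2'] at h1
        linarith
      have hyz : ‖‖z‖⁻¹ • z - z‖ ≤ δ := by
        have heq : ‖z‖⁻¹ • z - z = (‖z‖⁻¹ - 1) • z := by rw [sub_smul, one_smul]
        rw [heq, norm_smul, Real.norm_eq_abs]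
        have hinv : 1 ≤ ‖z‖⁻¹ := (one_le_inv_iff₀).mpr ⟨hzpos, hz1⟩
        rw [abs_of_nonneg (by linarith)]
        have : (‖z‖⁻¹ - 1) * ‖z‖ = 1 - ‖z‖ := by
          field_simp
        rw [this]; linarith
      have h1 : ‖x + z‖ ≤ ‖x + ‖z‖⁻¹ • z‖ + ‖‖z‖⁻¹ • z - z‖ := by
        have heq : x + z = (x + ‖z‖⁻¹ • z) - (‖z‖⁻¹ • z - z) := by abel
        rw [heq]; exact norm_sub_le _ _
      linarith
  · -- sphere criterion ⇒ Daugavet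
    intro hS f y hfne hyne
    have hfpos : 0 < ‖f‖ := norm_pos_iff.mpr hfne
    have hypos : 0 < ‖y‖ := norm_pos_iff.mpr hyne
    set c : ℝ := ‖f‖ * ‖y‖ with hcdef
    have hcpos : 0 < c := mul_pos hfpos hypos
    have hTnorm : ‖f.smulRight y‖ = c := norm_smulRight_apply f y
    have hub : ‖ContinuousLinearMap.id ℝ X + f.smulRight y‖ ≤ 1 + ‖f.smulRight y‖ := by
      calc ‖ContinuousLinearMap.id ℝ X + f.smulRight y‖
          ≤ ‖ContinuousLinearMap.id ℝ X‖ + ‖f.smulRight y‖ := norm_add_le _ _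
        _ = 1 + ‖f.smulRight y‖ := by rw [norm_id]
    have hlb : 1 + ‖f.smulRight y‖ ≤ ‖ContinuousLinearMap.id ℝ X + f.smulRight y‖ := by
      rw [hTnorm]
      refine le_of_forall_pos_le_add ?_
      intro ε hε
      set δ : ℝ := ε / (2 * c + 1) with hδdef
      have hδpos : 0 < δ := div_pos hε (by linarith)
      have hδε : (2 * c + 1) * δ = ε := by
        rw [hδdef]; field_simp
      -- apply the criterion with x = y/‖y‖ and g = f/‖f‖
      have hxnorm : ‖(‖y‖⁻¹ • y : X)‖ = 1 := by
        rw [norm_smul, norm_inv, norm_norm, inv_mul_cancel₀ (ne_of_gt hypos)]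
      have hgnorm : ‖(‖f‖⁻¹ • f : X →L[ℝ] ℝ)‖ = 1 := by
        rw [norm_smul (‖f‖⁻¹) f, norm_inv, norm_norm, inv_mul_cancel₀ (ne_of_gt hfpos)]
      obtain ⟨w, hw1, hw2, hw3⟩ := hS (‖y‖⁻¹ • y) hxnorm (‖f‖⁻¹ • f) hgnorm δ hδpos
      have hgw : (‖f‖⁻¹ • f) w = ‖f‖⁻¹ * f w := by
        rw [ContinuousLinearMap.smul_apply, smul_eq_mul]
      rw [hgw] at hw2
      have hfw_ge : ‖f‖ * (1 - δ) ≤ f w := by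
        have h1 := mul_le_mul_of_nonneg_left hw2 hfpos.le
        rw [← mul_assoc, mul_inv_cancel₀ (ne_of_gt hfpos), one_mul] at h1
        exact h1
      have hfw_le : f w ≤ ‖f‖ := by
        have h1 : f w ≤ |f w| := le_abs_self _
        have h2 : |f w| ≤ ‖f‖ * ‖w‖ := f.le_opNorm w
        rw [hw1, mul_one] at h2; linarith
      -- set t = f w * ‖y‖, so (Id + T) w = w + t • u with u = ‖y‖⁻¹ • y
      set u : X := ‖y‖⁻¹ • y with hudef
      set t : ℝ := f w * ‖y‖ with htdef
      have ht_ge : c * (1 - δ) ≤ t := by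
        rw [htdef, hcdef]
        calc ‖f‖ * ‖y‖ * (1 - δ) = (‖f‖ * (1 - δ)) * ‖y‖ := by ring
          _ ≤ f w * ‖y‖ := mul_le_mul_of_nonneg_right hfw_ge hypos.le
      have ht_le : t ≤ c := by
        rw [htdef, hcdef]
        exact mul_le_mul_of_nonneg_right hfw_le hypos.le
      have hyu : f w • y = t • u := by
        rw [hudef, htdef, smul_smul, mul_assoc, mul_inv_cancel₀ (ne_of_gt hypos), mul_one]
      have happly : (ContinuousLinearMap.id ℝ X + f.smulRight y) w = w + t • u := by
        simp only [ContinuousLinearMap.add_apply, ContinuousLinearMap.id_apply,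
          ContinuousLinearMap.smulRight_apply]
        rw [hyu]
      have hunorm : ‖u‖ = 1 := hxnorm
      have hwu : 2 - δ ≤ ‖u + w‖ := hw3
      -- lower bound on ‖w + t • u‖
      have hkey : 1 + c - (2 * c + 1) * δ ≤ ‖w + t • u‖ := by
        rcases le_or_gt 1 δ with hδbig | hδsmall
        · have : (2 * c + 1) * 1 ≤ (2 * c + 1) * δ :=
            mul_le_mul_of_nonneg_left hδbig (by linarith)
          have h0 := norm_nonneg (w + t • u)
          nlinarith
        rcases le_or_gt t 1 with hcase | hcase
        · -- t ≤ 1 : ‖w + t•u‖ ≥ ‖w+u‖ - (1-t)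
          have heq : u + w = (w + t • u) + (1 - t) • u := by
            rw [sub_smul, one_smul]; abel
          have h1 : ‖u + w‖ ≤ ‖w + t • u‖ + ‖(1 - t) • u‖ := by
            rw [heq]; exact norm_add_le _ _
          have h2 : ‖(1 - t) • u‖ = 1 - t := by
            rw [norm_smul, hunorm, mul_one, Real.norm_eq_abs,
              abs_of_nonneg (by linarith)]
          rw [h2] at h1
          have hr : c * (1 - δ) = c - c * δ := by ring
          have hq : 0 ≤ c * δ := mul_nonneg hcpos.le hδpos.le
          nlinarith [ht_ge, hwu, h1, hq]
        · -- t > 1 : w + t•u = t•(u+w) - (t-1)•w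
          have heq : w + t • u = t • (u + w) - (t - 1) • w := by
            rw [smul_add, sub_smul, one_smul]; abel
          have h1 : ‖t • (u + w)‖ ≤ ‖w + t • u‖ + ‖(t - 1) • w‖ := by
            have : t • (u + w) = (w + t • u) + (t - 1) • w := by rw [heq]; abel
            rw [this]; exact norm_add_le _ _
          have h2 : ‖(t - 1) • w‖ = t - 1 := by
            rw [norm_smul, hw1, mul_one, Real.norm_eq_abs, abs_of_nonneg (by linarith)]
          have h3 : t * (2 - δ) ≤ ‖t • (u + w)‖ := by
            rw [norm_smul, Real.norm_eq_abs, abs_of_nonneg (by linarith)]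
            exact mul_le_mul_of_nonneg_left hwu (by linarith)
          rw [h2] at h1
          have hp : c * (1 - δ) * (1 - δ) ≤ t * (1 - δ) :=
            mul_le_mul_of_nonneg_right ht_ge (by linarith)
          have hq : 0 ≤ c * (δ * δ) := mul_nonneg hcpos.le (mul_self_nonneg δ)
          nlinarith [hp, hq, h1, h3]
      have hle : ‖w + t • u‖ ≤ ‖ContinuousLinearMap.id ℝ X + f.smulRight y‖ := by
        have := (ContinuousLinearMap.id ℝ X + f.smulRight y).le_opNorm w
        rw [happly, hw1, mul_one] at this
        exact this
      linarith [hδε ▸ hkey]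
    linarith
end

section
/- Let X₁, X₂ and Y be Banach spaces, let X = X₁ ⊕_∞ X₂, and let T : X → Y be a bounded linear operator with restrictions T₁ and T₂. If T₁ and T₂ are strong Daugavet operators, then T is a strong Daugavet operator. -/
/-- A bounded linear operator `T : X → Y` is a *strong Daugavet operator* if for every
`x, y` in the unit sphere of `X` and every `ε > 0` there is `z` in the unit sphere with
`‖x + z‖ ≥ 2 - ε` and `‖T (y - z)‖ ≤ ε`. -/
def IsStrongDaugavet {X Y : Type*} [NormedAddCommGroup X] [NormedSpace ℝ X]
    [NormedAddCommGroup Y] [NormedSpace ℝ Y] (T : X →L[ℝ] Y) : Prop :=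
  ∀ x y : X, ‖x‖ = 1 → ‖y‖ = 1 → ∀ ε : ℝ, 0 < ε →
    ∃ z : X, ‖z‖ = 1 ∧ 2 - ε ≤ ‖x + z‖ ∧ ‖T (y - z)‖ ≤ ε

/-!
A unit vector `x` of `X₁ ⊕_∞ X₂` has a unit coordinate, say `‖x₁‖ = 1`. For `z = (z₁, y₂)` we get
`T (y - z) = T₁ (y₁ - z₁)` and `‖x + z‖ ≥ ‖x₁ + z₁‖`, so it suffices to find `z₁` for `T₁`, with
`‖z₁‖ = 1` when `‖y₁‖ = 1` and only `‖z₁‖ ≤ 1` otherwise (then `‖y₂‖ = 1`). The latter needs the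
definition for `y` in the unit ball: write `y = a • u + b • (-u)` with `‖u‖ = 1`, take `z₁` for
`(x, u)`, then `z₂` for `(s, -u)` with `s` the normalisation of `x + z₁`, and put
`z = a • z₁ + b • z₂`. A functional nearly norming `s + z₂` nearly norms `x`, `z₁` and `z₂` at once,
so `‖x + z‖` is close to `2`.
-/

section

variable {X : Type*} [NormedAddCommGroup X] [NormedSpace ℝ X]

lemma exists_norm_eq_one_smul_eq [Nontrivial X] (y : X) : ∃ u : X, ‖u‖ = 1 ∧ ‖y‖ • u = y := by
  by_cases hy : y = 0
  · obtain ⟨u, hu⟩ := exists_norm_eq X zero_le_one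
    exact ⟨u, hu, by simp [hy]⟩
  · exact ⟨‖y‖⁻¹ • y, norm_smul_inv_norm hy, smul_inv_smul₀ (norm_ne_zero_iff.mpr hy) y⟩

lemma exists_norm_eq_one_mem_segment_neg [Nontrivial X] {y : X} (hy : ‖y‖ ≤ 1) :
    ∃ u : X, ‖u‖ = 1 ∧ y ∈ segment ℝ u (-u) := by
  obtain ⟨u, hu, hyu⟩ := exists_norm_eq_one_smul_eq y
  refine ⟨u, hu, (1 + ‖y‖) / 2, (1 - ‖y‖) / 2, by positivity, by linarith, by ring, ?_⟩
  conv_rhs => rw [← hyu]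
  module

lemma two_sub_le_norm_add_convexComb {x z₁ z₂ s : X} {δ a b : ℝ}
    (hx : ‖x‖ ≤ 1) (hz₁ : ‖z₁‖ ≤ 1) (hz₂ : ‖z₂‖ ≤ 1) (hs : ‖s‖ ≤ 1)
    (hxz₁ : 2 - δ ≤ ‖x + z₁‖) (hs_eq : ‖x + z₁‖ • s = x + z₁) (hsz₂ : 2 - δ ≤ ‖s + z₂‖)
    (ha : 0 ≤ a) (hb : 0 ≤ b) (hab : a + b = 1) :
    2 - 6 * δ ≤ ‖x + (a • z₁ + b • z₂)‖ := by
  obtain ⟨f, hf, hfs⟩ := exists_dual_vector'' ℝ (s + z₂)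
  have hf_le (v : X) : f v ≤ ‖v‖ :=
    (le_abs_self _).trans ((f.le_opNorm v).trans (mul_le_of_le_one_left (norm_nonneg v) hf))
  have hxz₁_le : ‖x + z₁‖ ≤ 2 := by linarith [norm_add_le x z₁]
  have hfsz₂ : f s + f z₂ = ‖s + z₂‖ := by rw [← map_add, hfs]; rfl
  have hfs_ge : 1 - δ ≤ f s := by linarith [hf_le z₂]
  have hfz₂_ge : 1 - δ ≤ f z₂ := by linarith [hf_le s]
  -- `f` nearly norms `x + z₁`, a positive multiple of `s`, hence nearly norms `x` and `z₁`
  have hfxz₁ : f x + f z₁ = ‖x + z₁‖ * f s := by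
    conv_lhs => rw [← map_add, ← hs_eq, map_smul, smul_eq_mul]
  have hgap : ‖x + z₁‖ * (1 - f s) ≤ 2 * δ := by nlinarith [hf_le s]
  have hfx_ge : 1 - 3 * δ ≤ f x := by linarith [hf_le z₁]
  have hfz₁_ge : 1 - 3 * δ ≤ f z₁ := by linarith [hf_le x]
  calc 2 - 6 * δ ≤ f x + (a * f z₁ + b * f z₂) := by nlinarith
    _ = f (x + (a • z₁ + b • z₂)) := by simp
    _ ≤ _ := hf_le _

variable {Y : Type*} [NormedAddCommGroup Y] [NormedSpace ℝ Y] {T : X →L[ℝ] Y}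

lemma IsStrongDaugavet.exists_of_norm_le_one (hT : IsStrongDaugavet T) {x y : X}
    (hx : ‖x‖ = 1) (hy : ‖y‖ ≤ 1) {ε : ℝ} (hε : 0 < ε) :
    ∃ z : X, ‖z‖ ≤ 1 ∧ 2 - ε ≤ ‖x + z‖ ∧ ‖T (y - z)‖ ≤ ε := by
  have : Nontrivial X := nontrivial_of_ne x 0 (norm_ne_zero_iff.mp (by simp [hx]))
  obtain ⟨u, hu, a, b, ha, hb, hab, rfl⟩ := exists_norm_eq_one_mem_segment_neg hy
  obtain ⟨z₁, hz₁, hxz₁, hTz₁⟩ := hT x u hx hu (ε / 6) (by positivity)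
  obtain ⟨s, hs, hs_eq⟩ := exists_norm_eq_one_smul_eq (x + z₁)
  obtain ⟨z₂, hz₂, hsz₂, hTz₂⟩ := hT s (-u) hs (by rwa [norm_neg]) (ε / 6) (by positivity)
  refine ⟨a • z₁ + b • z₂, ?_, ?_, ?_⟩
  · simpa using convex_closedBall (0 : X) 1 (by simpa using hz₁.le) (by simpa using hz₂.le)
      ha hb hab
  · linarith [two_sub_le_norm_add_convexComb hx.le hz₁.le hz₂.le hs.le hxz₁ hs_eq hsz₂ ha hb hab]
  · have hT_eq : T (a • u + b • -u - (a • z₁ + b • z₂)) = a • T (u - z₁) + b • T (-u - z₂) := by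
      simp only [map_sub, map_add, map_smul, map_neg]
      module
    have hmem := convex_closedBall (0 : Y) (ε / 6) (mem_closedBall_zero_iff.mpr hTz₁)
      (mem_closedBall_zero_iff.mpr hTz₂) ha hb hab
    rw [hT_eq]
    linarith [mem_closedBall_zero_iff.mp hmem]

lemma IsStrongDaugavet.exists_max_norm_eq_one (hT : IsStrongDaugavet T) {x y : X} {r : ℝ}
    (hx : ‖x‖ = 1) (hyr : max ‖y‖ r = 1) {ε : ℝ} (hε : 0 < ε) :
    ∃ z : X, max ‖z‖ r = 1 ∧ 2 - ε ≤ ‖x + z‖ ∧ ‖T (y - z)‖ ≤ ε := by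
  rcases max_choice ‖y‖ r with hy | hr
  · have hy₁ : ‖y‖ = 1 := hy.symm.trans hyr
    obtain ⟨z, hz, hxz, hTz⟩ := hT x y hx hy₁ ε hε
    exact ⟨z, by rw [hz, ← hy₁]; exact hy, hxz, hTz⟩
  · have hr₁ : r = 1 := hr.symm.trans hyr
    obtain ⟨z, hz, hxz, hTz⟩ := hT.exists_of_norm_le_one hx ((le_max_left _ _).trans hyr.le) hε
    exact ⟨z, by rw [hr₁]; exact max_eq_right hz, hxz, hTz⟩

end

theorem strongDaugavet_of_restrictions_inftySum_general
    {X₁ X₂ Y : Type*}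
    [NormedAddCommGroup X₁] [NormedSpace ℝ X₁]
    [NormedAddCommGroup X₂] [NormedSpace ℝ X₂]
    [NormedAddCommGroup Y] [NormedSpace ℝ Y]
    (T : WithLp ⊤ (X₁ × X₂) →L[ℝ] Y)
    (T₁ : X₁ →L[ℝ] Y) (T₂ : X₂ →L[ℝ] Y)
    (hT₁ : ∀ x₁ : X₁, T₁ x₁ = T ((WithLp.prodContinuousLinearEquiv ⊤ ℝ X₁ X₂).symm (x₁, 0)))
    (hT₂ : ∀ x₂ : X₂, T₂ x₂ = T ((WithLp.prodContinuousLinearEquiv ⊤ ℝ X₁ X₂).symm (0, x₂)))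
    (h₁ : IsStrongDaugavet T₁) (h₂ : IsStrongDaugavet T₂) :
    IsStrongDaugavet T := by
  intro x y hx hy ε hε
  rw [WithLp.prod_norm_eq_sup] at hx hy
  rcases max_choice ‖x.fst‖ ‖x.snd‖ with hx₁ | hx₂
  · obtain ⟨z₁, hz, hxz, hTz⟩ := h₁.exists_max_norm_eq_one (hx₁ ▸ hx) hy hε
    refine ⟨WithLp.toLp ⊤ (z₁, y.snd), hz, le_max_of_le_left hxz, ?_⟩
    have hyz : y - WithLp.toLp ⊤ (z₁, y.snd) =
        (WithLp.prodContinuousLinearEquiv ⊤ ℝ X₁ X₂).symm (y.fst - z₁, 0) :=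
      (WithLp.prodContinuousLinearEquiv ⊤ ℝ X₁ X₂).injective (by ext <;> simp)
    rwa [hyz, ← hT₁]
  · obtain ⟨z₂, hz, hxz, hTz⟩ := h₂.exists_max_norm_eq_one (hx₂ ▸ hx) ((max_comm _ _).trans hy) hε
    refine ⟨WithLp.toLp ⊤ (y.fst, z₂), (max_comm _ _).trans hz, le_max_of_le_right hxz, ?_⟩
    have hyz : y - WithLp.toLp ⊤ (y.fst, z₂) =
        (WithLp.prodContinuousLinearEquiv ⊤ ℝ X₁ X₂).symm (0, y.snd - z₂) :=
      (WithLp.prodContinuousLinearEquiv ⊤ ℝ X₁ X₂).injective (by ext <;> simp)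
    rwa [hyz, ← hT₂]

theorem strongDaugavet_of_restrictions_inftySum
    {X₁ X₂ Y : Type*}
    [NormedAddCommGroup X₁] [NormedSpace ℝ X₁] [CompleteSpace X₁]
    [NormedAddCommGroup X₂] [NormedSpace ℝ X₂] [CompleteSpace X₂]
    [NormedAddCommGroup Y] [NormedSpace ℝ Y] [CompleteSpace Y]
    (T : WithLp ⊤ (X₁ × X₂) →L[ℝ] Y)
    (T₁ : X₁ →L[ℝ] Y) (T₂ : X₂ →L[ℝ] Y)
    (hT₁ : ∀ x₁ : X₁, T₁ x₁ = T ((WithLp.prodContinuousLinearEquiv ⊤ ℝ X₁ X₂).symm (x₁, 0)))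
    (hT₂ : ∀ x₂ : X₂, T₂ x₂ = T ((WithLp.prodContinuousLinearEquiv ⊤ ℝ X₁ X₂).symm (0, x₂)))
    (h₁ : IsStrongDaugavet T₁) (h₂ : IsStrongDaugavet T₂) :
    IsStrongDaugavet T :=
  strongDaugavet_of_restrictions_inftySum_general T T₁ T₂ hT₁ hT₂ h₁ h₂
end

section
/- Let x₁, …, xₙ be vectors in a real normed space that are quasi-collinear, i.e., ‖x₁ + … + xₙ‖ = ‖x₁‖ + … + ‖xₙ‖. Then for all nonnegative real coefficients a₁, …, aₙ one has ‖a₁x₁ + … + aₙxₙ‖ = a₁‖x₁‖ + … + aₙ‖xₙ‖. -/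
/-- If `x₁, …, xₙ` are quasi-collinear vectors of a real normed space, i.e.
`‖x₁ + … + xₙ‖ = ‖x₁‖ + … + ‖xₙ‖`, then for all nonnegative coefficients `aᵢ` one has
`‖a₁ x₁ + … + aₙ xₙ‖ = a₁ ‖x₁‖ + … + aₙ ‖xₙ‖`. -/
theorem norm_sum_smul_of_quasiCollinear
    {E : Type*} [NormedAddCommGroup E] [NormedSpace ℝ E] {n : ℕ} (x : Fin n → E)
    (hqc : ‖∑ i, x i‖ = ∑ i, ‖x i‖)
    (a : Fin n → ℝ) (ha : ∀ i, 0 ≤ a i) :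
    ‖∑ i, a i • x i‖ = ∑ i, a i * ‖x i‖ := by
  set M : ℝ := ∑ i, a i with hMdef
  have hM0 : 0 ≤ M := Finset.sum_nonneg fun i _ => ha i
  have hMi : ∀ i, a i ≤ M := fun i =>
    Finset.single_le_sum (fun j _ => ha j) (Finset.mem_univ i)
  have hle : ‖∑ i, a i • x i‖ ≤ ∑ i, a i * ‖x i‖ := by
    calc ‖∑ i, a i • x i‖ ≤ ∑ i, ‖a i • x i‖ := norm_sum_le _ _
    _ = ∑ i, a i * ‖x i‖ := by
        refine Finset.sum_congr rfl fun i _ => ?_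
        rw [norm_smul, Real.norm_of_nonneg (ha i)]
  have hsplit : (∑ i, M • x i) = (∑ i, a i • x i) + ∑ i, (M - a i) • x i := by
    rw [← Finset.sum_add_distrib]
    refine Finset.sum_congr rfl fun i _ => ?_
    rw [← add_smul]; ring_nf
  have key : M * ∑ i, ‖x i‖ ≤ ‖∑ i, a i • x i‖ + ∑ i, (M - a i) * ‖x i‖ := by
    calc M * ∑ i, ‖x i‖ = M * ‖∑ i, x i‖ := by rw [hqc]
    _ = ‖M • ∑ i, x i‖ := by rw [norm_smul, Real.norm_of_nonneg hM0]
    _ = ‖∑ i, M • x i‖ := by rw [Finset.smul_sum]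
    _ = ‖(∑ i, a i • x i) + ∑ i, (M - a i) • x i‖ := by rw [hsplit]
    _ ≤ ‖∑ i, a i • x i‖ + ‖∑ i, (M - a i) • x i‖ := norm_add_le _ _
    _ ≤ ‖∑ i, a i • x i‖ + ∑ i, ‖(M - a i) • x i‖ := by
        gcongr; exact norm_sum_le _ _
    _ = ‖∑ i, a i • x i‖ + ∑ i, (M - a i) * ‖x i‖ := by
        congr 1
        refine Finset.sum_congr rfl fun i _ => ?_
        rw [norm_smul, Real.norm_of_nonneg (sub_nonneg.2 (hMi i))]
  have hge : ∑ i, a i * ‖x i‖ ≤ ‖∑ i, a i • x i‖ := by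
    have : M * ∑ i, ‖x i‖ - ∑ i, (M - a i) * ‖x i‖ = ∑ i, a i * ‖x i‖ := by
      rw [Finset.mul_sum, ← Finset.sum_sub_distrib]
      refine Finset.sum_congr rfl fun i _ => ?_
      ring
    linarith
  linarith
end

section
/- Let X₁, X₂ and Y be Banach spaces, let X = X₁ ⊕_∞ X₂, and let T : X → Y be a bounded linear operator. If T is a strong Daugavet operator, then the restrictions T₁ and T₂ of T to X₁ and X₂ are strong Daugavet operators. -/
open NormedSpace

section NormedSpace

variable {V : Type*} [NormedAddCommGroup V] [NormedSpace ℝ V]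

theorem norm_normalize_sub_self {x : V} (hx : x ≠ 0) : ‖normalize x - x‖ = |1 - ‖x‖| := by
  have hx' : ‖x‖ ≠ 0 := norm_ne_zero_iff.mpr hx
  have : normalize x - x = (‖x‖⁻¹ - 1) • x := by rw [sub_smul, one_smul]; rfl
  rw [this, norm_smul, Real.norm_eq_abs, ← abs_norm x, ← abs_mul, abs_norm, sub_mul,
    inv_mul_cancel₀ hx', one_mul]

theorem mul_norm_add_sub_le_norm_smul_add {t : ℝ} (ht : 1 ≤ t) (v : V) {z : V} (hz : ‖z‖ ≤ 1) :
    t * ‖v + z‖ - (t - 1) ≤ ‖t • v + z‖ := by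
  have hsplit : t • (v + z) = (t • v + z) + (t - 1) • z := by module
  have h := norm_add_le (t • v + z) ((t - 1) • z)
  rw [← hsplit, norm_smul, norm_smul, Real.norm_of_nonneg (by linarith),
    Real.norm_of_nonneg (by linarith)] at h
  nlinarith

end NormedSpace

section StrongDaugavet

variable {X X' Y : Type*} [NormedAddCommGroup X] [NormedSpace ℝ X]
  [NormedAddCommGroup X'] [NormedSpace ℝ X'] [NormedAddCommGroup Y] [NormedSpace ℝ Y]

theorem IsStrongDaugavet.comp_linearIsometryEquiv {T : X →L[ℝ] Y} (hT : IsStrongDaugavet T)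
    (e : X' ≃ₗᵢ[ℝ] X) : IsStrongDaugavet (T.comp (e : X' →L[ℝ] X)) := by
  intro x y hx hy ε hε
  obtain ⟨z, hz, hxz, hTz⟩ := hT (e x) (e y) (by simpa) (by simpa) ε hε
  refine ⟨e.symm z, by simpa, ?_, ?_⟩
  · simpa [← e.norm_map (x + e.symm z)] using hxz
  · simpa using hTz

theorem isStrongDaugavet_of_forall_exists_norm_le_one {T : X →L[ℝ] Y}
    (h : ∀ x y : X, ‖x‖ = 1 → ‖y‖ = 1 → ∀ ε : ℝ, 0 < ε →
      ∃ z : X, ‖z‖ ≤ 1 ∧ 2 - ε ≤ ‖x + z‖ ∧ ‖T (y - z)‖ ≤ ε) :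
    IsStrongDaugavet T := by
  intro x y hx hy ε hε
  set η := min (1 / 2) (ε / (2 + ‖T‖))
  have hη : 0 < η := lt_min one_half_pos (by positivity)
  have hηε : η * (2 + ‖T‖) ≤ ε := (le_div_iff₀ (by positivity)).mp (min_le_right _ _)
  obtain ⟨z, hz, hxz, hTz⟩ := h x y hx hy η hη
  have hη_half : η ≤ 1 / 2 := min_le_left _ _
  have hz_lower : 1 - η ≤ ‖z‖ := by linarith [norm_add_le x z]
  have hz0 : z ≠ 0 := norm_pos_iff.mp (by linarith)
  have hdist : ‖normalize z - z‖ ≤ η := by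
    rw [norm_normalize_sub_self hz0, abs_of_nonneg (by linarith)]
    linarith
  refine ⟨normalize z, norm_normalize hz0, ?_, ?_⟩
  · have hsplit : x + z = (x + normalize z) - (normalize z - z) := by abel
    have := norm_sub_le (x + normalize z) (normalize z - z)
    rw [← hsplit] at this
    nlinarith [norm_nonneg T]
  · have hT_dist : ‖T (z - normalize z)‖ ≤ ‖T‖ * η := by
      rw [← norm_neg, ← map_neg, neg_sub]
      exact (T.le_opNorm _).trans (by gcongr)
    calc ‖T (y - normalize z)‖ = ‖T (y - z) + T (z - normalize z)‖ := by
          rw [← map_add, sub_add_sub_cancel]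
      _ ≤ η + ‖T‖ * η := (norm_add_le _ _).trans (add_le_add hTz hT_dist)
      _ ≤ ε := by nlinarith

end StrongDaugavet

section InftySum

variable {A B Y : Type*} [NormedAddCommGroup A] [NormedSpace ℝ A]
  [NormedAddCommGroup B] [NormedSpace ℝ B] [NormedAddCommGroup Y] [NormedSpace ℝ Y]
  {T : A × B →L[ℝ] Y}

theorem IsStrongDaugavet.exists_norm_add_fst_ge (hT : IsStrongDaugavet T) {y : A} (hy : ‖y‖ = 1)
    {u : A} (hu : 1 ≤ ‖u‖) {b : B} (hb : ‖b‖ ≤ 1) {δ : ℝ} (hδ : 0 < δ) (hδ₁ : δ < 1) :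
    ∃ z : A × B, ‖z‖ ≤ 1 ∧ ‖u‖ + 1 - ‖u‖ * δ ≤ ‖u + z.1‖ ∧ ‖T ((y, b) - z)‖ ≤ δ := by
  have hu0 : u ≠ 0 := norm_pos_iff.mp (by linarith)
  obtain ⟨z, hz, hxz, hTz⟩ := hT (normalize u, 0) (y, b)
    (by simp [Prod.norm_def, norm_normalize hu0]) (by simp [Prod.norm_def, hy, hb]) δ hδ
  -- `‖z.2‖ ≤ 1 < 2 - δ`, so the norm of the sum is carried by the first coordinate.
  have hfst : 2 - δ ≤ ‖normalize u + z.1‖ := by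
    rw [Prod.norm_def, Prod.fst_add, Prod.snd_add, zero_add] at hxz
    rcases le_max_iff.mp hxz with h | h
    · exact h
    · linarith [(norm_snd_le z).trans hz.le]
  refine ⟨z, hz.le, ?_, hTz⟩
  have := mul_norm_add_sub_le_norm_smul_add hu (normalize u) ((norm_fst_le z).trans hz.le)
  rw [norm_smul_normalize] at this
  nlinarith

theorem IsStrongDaugavet.exists_telescoping (hT : IsStrongDaugavet T) {x y : A} (hx : ‖x‖ = 1)
    (hy : ‖y‖ = 1) {δ : ℝ} (hδ : 0 < δ) (n : ℕ) (hn : n * δ < 1) :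
    ∃ (w : A) (b : B), ‖w‖ ≤ n ∧ ‖b‖ ≤ 1 ∧ n + 1 - n ^ 2 * δ ≤ ‖x + w‖ ∧
      ‖T ((n : ℝ) • y - w, -b)‖ ≤ n * δ := by
  induction n with
  | zero => exact ⟨0, 0, by simp, by simp, by simp [hx], by simp [← Prod.zero_eq_mk]⟩
  | succ n ih =>
    push_cast at hn ⊢
    obtain ⟨w, b, hw, hb, hxw, hTw⟩ := ih (by nlinarith)
    have hxw_le : ‖x + w‖ ≤ n + 1 := (norm_add_le x w).trans (by linarith)
    obtain ⟨z, hz, hxz, hTz⟩ :=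
      hT.exists_norm_add_fst_ge hy (u := x + w) (by nlinarith) hb hδ (by nlinarith)
    refine ⟨w + z.1, z.2, ?_, (norm_snd_le z).trans hz, ?_, ?_⟩
    · linarith [norm_add_le w z.1, (norm_fst_le z).trans hz]
    · rw [← add_assoc]
      nlinarith
    · have hsum : (((n : ℝ) + 1) • y - (w + z.1), -z.2)
          = ((n : ℝ) • y - w, -b) + ((y, b) - z) := by
        ext <;> simp <;> module
      rw [hsum, map_add]
      linarith [norm_add_le (T ((n : ℝ) • y - w, -b)) (T ((y, b) - z))]

theorem IsStrongDaugavet.comp_inl (hT : IsStrongDaugavet T) :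
    IsStrongDaugavet (T.comp (.inl ℝ A B)) := by
  refine isStrongDaugavet_of_forall_exists_norm_le_one fun x y hx hy ε hε => ?_
  obtain ⟨n, hn⟩ := exists_nat_gt (2 * ‖T‖ / ε)
  have hn_pos : (0 : ℝ) < n := lt_of_le_of_lt (by positivity) hn
  have hn_one : (1 : ℝ) ≤ n := Nat.one_le_cast.mpr (Nat.cast_pos.mp hn_pos)
  have hTn : ‖T‖ / n ≤ ε / 2 := by
    rw [div_lt_iff₀ hε] at hn
    rw [div_le_iff₀ hn_pos]
    linarith
  set δ := min ε 1 / (2 * n ^ 2) with hδ_def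
  have hδ : 0 < δ := by positivity
  have hn2δ : n ^ 2 * δ = min ε 1 / 2 := by rw [hδ_def]; field_simp
  have hn2δ_le : n ^ 2 * δ ≤ ε / 2 ∧ n ^ 2 * δ ≤ 1 / 2 := by
    rw [hn2δ]; exact ⟨by linarith [min_le_left ε 1], by linarith [min_le_right ε 1]⟩
  have hδ_le : δ ≤ n ^ 2 * δ := le_mul_of_one_le_left hδ.le (one_le_pow₀ hn_one)
  obtain ⟨w, b, hw, hb, hxw, hTw⟩ := hT.exists_telescoping hx hy hδ n (by nlinarith)
  have hw_avg : ‖(n : ℝ)⁻¹ • w‖ ≤ 1 := by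
    rw [norm_smul, Real.norm_of_nonneg (by positivity), inv_mul_le_iff₀ hn_pos]
    linarith
  refine ⟨(n : ℝ)⁻¹ • w, hw_avg, ?_, ?_⟩
  · have hsplit : x + w = (x + (n : ℝ)⁻¹ • w) + ((n : ℝ) - 1) • ((n : ℝ)⁻¹ • w) := by
      rw [smul_smul, sub_mul, mul_inv_cancel₀ hn_pos.ne']
      module
    have h := norm_add_le (x + (n : ℝ)⁻¹ • w) (((n : ℝ) - 1) • ((n : ℝ)⁻¹ • w))
    rw [← hsplit, norm_smul, Real.norm_of_nonneg (by linarith)] at h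
    nlinarith
  · have hsum : (n : ℝ) • (y - (n : ℝ)⁻¹ • w, (0 : B)) = ((n : ℝ) • y - w, -b) + (0, b) := by
      ext <;> simp [smul_sub, smul_smul, mul_inv_cancel₀ hn_pos.ne']
    have hTb : ‖T (0, b)‖ ≤ ‖T‖ :=
      (T.le_opNorm _).trans (mul_le_of_le_one_right (norm_nonneg T) (by simpa using hb))
    have hscaled : n * ‖T (y - (n : ℝ)⁻¹ • w, 0)‖ ≤ n * δ + ‖T‖ :=
      calc n * ‖T (y - (n : ℝ)⁻¹ • w, 0)‖ = ‖T ((n : ℝ) • (y - (n : ℝ)⁻¹ • w, (0 : B)))‖ := by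
            rw [map_smul, norm_smul, Real.norm_of_nonneg hn_pos.le]
        _ ≤ n * δ + ‖T‖ := by
            rw [hsum, map_add]
            exact (norm_add_le _ _).trans (add_le_add hTw hTb)
    have hT_avg : ‖T (y - (n : ℝ)⁻¹ • w, 0)‖ ≤ δ + ‖T‖ / n := by
      rw [add_div' _ _ _ hn_pos.ne', le_div_iff₀ hn_pos]
      linarith
    simp only [ContinuousLinearMap.comp_apply, ContinuousLinearMap.inl_apply]
    linarith

theorem IsStrongDaugavet.comp_inr (hT : IsStrongDaugavet T) :
    IsStrongDaugavet (T.comp (.inr ℝ A B)) :=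
  (hT.comp_linearIsometryEquiv (LinearIsometryEquiv.prodComm ℝ B A)).comp_inl

end InftySum

theorem restrictions_strongDaugavet_of_inftySum_general
    {X₁ X₂ Y : Type*}
    [NormedAddCommGroup X₁] [NormedSpace ℝ X₁]
    [NormedAddCommGroup X₂] [NormedSpace ℝ X₂]
    [NormedAddCommGroup Y] [NormedSpace ℝ Y]
    (T : WithLp ⊤ (X₁ × X₂) →L[ℝ] Y)
    (T₁ : X₁ →L[ℝ] Y) (T₂ : X₂ →L[ℝ] Y)
    (hT₁ : ∀ x₁ : X₁, T₁ x₁ = T ((WithLp.prodContinuousLinearEquiv ⊤ ℝ X₁ X₂).symm (x₁, 0)))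
    (hT₂ : ∀ x₂ : X₂, T₂ x₂ = T ((WithLp.prodContinuousLinearEquiv ⊤ ℝ X₁ X₂).symm (0, x₂)))
    (hT : IsStrongDaugavet T) :
    IsStrongDaugavet T₁ ∧ IsStrongDaugavet T₂ := by
  let e : X₁ × X₂ ≃ₗᵢ[ℝ] WithLp ⊤ (X₁ × X₂) := WithLp.prodEquivₗᵢ.symm
  have hT' := hT.comp_linearIsometryEquiv e
  have h₁ : T₁ = (T.comp (e : X₁ × X₂ →L[ℝ] _)).comp (.inl ℝ X₁ X₂) :=
    ContinuousLinearMap.ext hT₁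
  have h₂ : T₂ = (T.comp (e : X₁ × X₂ →L[ℝ] _)).comp (.inr ℝ X₁ X₂) :=
    ContinuousLinearMap.ext hT₂
  exact ⟨h₁ ▸ hT'.comp_inl, h₂ ▸ hT'.comp_inr⟩

theorem restrictions_strongDaugavet_of_inftySum
    {X₁ X₂ Y : Type*}
    [NormedAddCommGroup X₁] [NormedSpace ℝ X₁] [CompleteSpace X₁]
    [NormedAddCommGroup X₂] [NormedSpace ℝ X₂] [CompleteSpace X₂]
    [NormedAddCommGroup Y] [NormedSpace ℝ Y] [CompleteSpace Y]
    (T : WithLp ⊤ (X₁ × X₂) →L[ℝ] Y)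
    (T₁ : X₁ →L[ℝ] Y) (T₂ : X₂ →L[ℝ] Y)
    (hT₁ : ∀ x₁ : X₁, T₁ x₁ = T ((WithLp.prodContinuousLinearEquiv ⊤ ℝ X₁ X₂).symm (x₁, 0)))
    (hT₂ : ∀ x₂ : X₂, T₂ x₂ = T ((WithLp.prodContinuousLinearEquiv ⊤ ℝ X₁ X₂).symm (0, x₂)))
    (hT : IsStrongDaugavet T) :
    IsStrongDaugavet T₁ ∧ IsStrongDaugavet T₂ :=
  restrictions_strongDaugavet_of_inftySum_general T T₁ T₂ hT₁ hT₂ hT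
end

section
/- Consider the real Banach space ℓ¹ = ℓ¹(ℕ, ℝ) and the sum functional T : ℓ¹ → ℝ, T x = Σ_{n=0}^∞ x(n). Then T is a strong Daugavet operator, but the restriction of T to the one-dimensional closed subspace spanned by the first unit vector e₀ (namely the map t·e₀ ↦ t from span{e₀} to ℝ) is not a strong Daugavet operator. In particular, the restriction to X₁ of a strong Daugavet operator on an ℓ¹-sum X₁ ⊕_1 X₂ need not be a strong Daugavet operator. -/
/-- The first unit vector `e₀ = (1, 0, 0, …)` of `ℓ¹ = ℓ¹(ℕ, ℝ)`. -/
noncomputable def e₀ : lp (fun _ : ℕ => ℝ) 1 := lp.single 1 0 (1 : ℝ)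

/-!
Given unit vectors `x, y` of `ℓ¹(α, ℝ)` with `α` infinite, pick two coordinates `i ≠ j` where `x`
is negligible and put `z = a eᵢ + b eⱼ` with `a = (1 + s)/2 ≥ 0 ≥ b = (s - 1)/2`, where
`s = ∑ y ∈ [-1, 1]`. Then `‖z‖ = a - b = 1` and `∑ z = a + b = ∑ y`, while `z` barely overlaps `x`,
so `‖x + z‖ ≈ ‖x‖ + ‖z‖ = 2`.

On a one-dimensional space the unit sphere is `{u, -u}`. For `x = u`, `y = -u` and `ε < 2` the
condition `‖x + z‖ ≥ 2 - ε` rules out `z = -u`, so `‖T (-2u)‖ ≤ ε` for all small `ε` and `T = 0`;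
but the restricted sum functional sends `e₀` to `1`.
-/

open scoped lp
open Filter

namespace lp

variable {α : Type*}

section NormOne

variable {E : α → Type*} [∀ i, NormedAddCommGroup (E i)]

theorem hasSum_norm_one (f : lp E 1) : HasSum (fun i => ‖f i‖) ‖f‖ := by
  simpa using hasSum_norm (p := 1) (by norm_num) f

theorem norm_add_norm_sub_two_mul_sum_le_norm_add (f g : lp E 1) (s : Finset α)
    (hg : ∀ i ∉ s, g i = 0) : ‖f‖ + ‖g‖ - 2 * ∑ i ∈ s, ‖f i‖ ≤ ‖f + g‖ := by
  classical
  have hsum : HasSum (fun i => ‖f i‖ + ‖g i‖ - 2 * if i ∈ s then ‖f i‖ else 0)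
      (‖f‖ + ‖g‖ - 2 * ∑ i ∈ s, ‖f i‖) := by
    refine ((hasSum_norm_one f).add (hasSum_norm_one g)).sub (HasSum.mul_left 2 ?_)
    simpa using hasSum_sum_of_ne_finset_zero
      (f := fun i => if i ∈ s then ‖f i‖ else 0) (fun i hi => if_neg hi)
  refine hasSum_le (fun i => ?_) hsum (hasSum_norm_one (f + g))
  by_cases hi : i ∈ s
  · simp only [hi, if_true, coeFn_add, Pi.add_apply]
    linarith [norm_le_add_norm_add' (f i) (g i)]
  · simp [hi, hg i hi]

theorem norm_single_add_single_one [DecidableEq α] {i j : α} (hij : i ≠ j) (a : E i) (b : E j) :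
    ‖lp.single 1 i a + lp.single 1 j b‖ = ‖a‖ + ‖b‖ := by
  refine le_antisymm ((norm_add_le _ _).trans_eq (by simp [lp.norm_single])) ?_
  have hle := norm_add_norm_sub_two_mul_sum_le_norm_add (lp.single 1 i a) (lp.single 1 j b) {j}
    fun k hk => lp.single_apply_ne 1 j b (Finset.notMem_singleton.mp hk)
  simpa [lp.norm_single, Pi.single_eq_of_ne hij.symm] using hle

theorem exists_ne_norm_add_norm_lt [Infinite α] (f : lp E 1) {ε : ℝ} (hε : 0 < ε) :
    ∃ i j, i ≠ j ∧ ‖f i‖ + ‖f j‖ < ε := by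
  have hsmall : ∀ᶠ i in cofinite, ‖f i‖ < ε / 2 :=
    (hasSum_norm_one f).summable.tendsto_cofinite_zero.eventually (gt_mem_nhds (half_pos hε))
  obtain ⟨i, hi, j, hj, hij⟩ := (frequently_cofinite_iff_infinite.mp hsmall.frequently).nontrivial
  exact ⟨i, j, hij, by linarith [Set.mem_ofPred.mp hi, Set.mem_ofPred.mp hj]⟩

end NormOne

theorem tsumCLM_single {𝕜 E : Type*} [NormedAddCommGroup E] [NormedRing 𝕜] [Module 𝕜 E]
    [IsBoundedSMul 𝕜 E] [CompleteSpace E] [DecidableEq α] (i : α) (a : E) :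
    tsumCLM 𝕜 α E (lp.single 1 i a) = a := by
  simp [tsum_pi_single]

theorem isStrongDaugavet_tsumCLM [Infinite α] : IsStrongDaugavet (tsumCLM ℝ α ℝ) := by
  classical
  intro x y hx hy ε hε
  obtain ⟨i, j, hij, hxij⟩ := exists_ne_norm_add_norm_lt x (half_pos hε)
  set s := tsumCLM ℝ α ℝ y
  have hs : |s| ≤ 1 := hy ▸ norm_tsum_le y
  set z : ℓ¹(α, ℝ) := lp.single 1 i ((1 + s) / 2) + lp.single 1 j ((s - 1) / 2)
  have hz : ‖z‖ = 1 := by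
    rw [norm_single_add_single_one hij, Real.norm_eq_abs, Real.norm_eq_abs, abs_of_nonneg,
      abs_of_nonpos] <;> linarith [abs_le.mp hs]
  refine ⟨z, hz, ?_, ?_⟩
  · have hsupp : ∀ k ∉ ({i, j} : Finset α), z k = 0 := fun k hk => by
      simp_all [z]
    have hle := norm_add_norm_sub_two_mul_sum_le_norm_add x z {i, j} hsupp
    rw [Finset.sum_pair hij, hx, hz] at hle
    linarith
  · have hzsum : tsumCLM ℝ α ℝ z = s := by
      rw [map_add, tsumCLM_single, tsumCLM_single]
      ring
    rw [map_sub, hzsum, sub_self]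
    simpa using hε.le

end lp

theorem IsStrongDaugavet.eq_zero_of_finrank_eq_one {X Y : Type*} [NormedAddCommGroup X]
    [NormedSpace ℝ X] [NormedAddCommGroup Y] [NormedSpace ℝ Y] {T : X →L[ℝ] Y}
    (hT : IsStrongDaugavet T) (hX : Module.finrank ℝ X = 1) : T = 0 := by
  obtain ⟨v, hv0, hv⟩ := finrank_eq_one_iff'.mp hX
  set u := ‖v‖⁻¹ • v
  have hu : ‖u‖ = 1 := norm_smul_inv_norm hv0
  have hmul : ∀ w, ∃ c : ℝ, w = c • u := fun w => by
    obtain ⟨c, rfl⟩ := hv w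
    exact ⟨c * ‖v‖, by simp [u, smul_smul, hv0]⟩
  have hsphere : ∀ z, ‖z‖ = 1 → z = u ∨ z = -u := fun z hz => by
    obtain ⟨c, rfl⟩ := hmul z
    rw [norm_smul, hu, mul_one, Real.norm_eq_abs] at hz
    rcases abs_eq zero_le_one |>.mp hz with rfl | rfl <;> simp
  have hTu : T u = 0 := by
    by_contra h
    obtain ⟨z, hz, hxz, hyz⟩ :=
      hT u (-u) hu (by rw [norm_neg, hu]) (min 1 ‖T u‖) (lt_min one_pos (norm_pos_iff.mpr h))
    rcases hsphere z hz with rfl | rfl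
    · rw [show -u - u = (-2 : ℝ) • u by module, map_smul, norm_smul] at hyz
      norm_num at hyz
      linarith [min_le_right 1 ‖T u‖, norm_pos_iff.mpr h]
    · rw [add_neg_cancel, norm_zero] at hxz
      linarith [min_le_left 1 ‖T u‖]
  ext w
  obtain ⟨c, rfl⟩ := hmul w
  simp [hTu]

/-- The sum functional `T x = ∑ₙ x (n)` is a strong Daugavet operator on
`ℓ¹ = ℓ¹(ℕ, ℝ)`, but its restriction to the one-dimensional subspace spanned by `e₀`
(i.e. the map `t • e₀ ↦ t`) is not a strong Daugavet operator. -/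
theorem sumFunctional_strongDaugavet_but_restriction_not :
    (∃ T : lp (fun _ : ℕ => ℝ) 1 →L[ℝ] ℝ,
      (∀ x : lp (fun _ : ℕ => ℝ) 1, T x = ∑' n : ℕ, x n) ∧ IsStrongDaugavet T) ∧
    (∀ S : ↥(Submodule.span ℝ ({e₀} : Set (lp (fun _ : ℕ => ℝ) 1))) →L[ℝ] ℝ,
      (∀ x : ↥(Submodule.span ℝ ({e₀} : Set (lp (fun _ : ℕ => ℝ) 1))),
        S x = ∑' n : ℕ, (x : lp (fun _ : ℕ => ℝ) 1) n) →
      ¬ IsStrongDaugavet S) := by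
  refine ⟨⟨lp.tsumCLM ℝ ℕ ℝ, fun _ => rfl, lp.isStrongDaugavet_tsumCLM⟩, fun S hS hSD => ?_⟩
  have he₀ : e₀ ≠ 0 := fun h => by simpa [e₀] using congr_arg (· 0) h
  have hS0 := hSD.eq_zero_of_finrank_eq_one (finrank_span_singleton he₀)
  have hSe₀ : S ⟨e₀, Submodule.mem_span_singleton_self e₀⟩ = 1 := by
    rw [hS]
    simp [e₀]
  simp [hS0] at hSe₀
end

section
/- A nonzero Banach lattice F has the positive Daugavet property if and only if for every a ≥ 0 in the unit sphere S(F), every positive continuous linear functional a* with ‖a*‖ = 1 and every ε > 0 there exists b ≥ 0 in S(F) such that a*(b) ≥ 1 − ε and ‖a + b‖ ≥ 2 − ε. -/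
/-!
For `T = f.smulRight a` with `a ≥ 0`, `f ≥ 0` and `‖a‖ = ‖f‖ = 1`, the equality `‖Id + T‖ = 2`
provides `y` in the unit ball with `‖y + f y • a‖` close to `2`. Since `|y + f y • a| ≤ |y| + a`
and `|f y| ≤ f |y|`, the normalization of `|y|` is the required `b`.

Conversely, for such a `b` a norming functional `g` of `a + b` has both `g a` and `g b` close
to `1`, so `‖(Id + c • T) b‖ ≥ g b + c * f b * g a` is close to `1 + c`. Normalizing `f` and `a`
reduces a general positive rank-one operator to `c • T` with `c = ‖f‖ * ‖a‖`.
-/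

open Filter Topology ContinuousLinearMap

section LatticeOrderedModule

variable {F : Type*} [AddCommGroup F] [Lattice F] [IsOrderedAddMonoid F] [Module ℝ F]

lemma inv_two_pow_smul_nonneg {x : F} (hx : 0 ≤ x) (k : ℕ) : 0 ≤ ((2 : ℝ) ^ k)⁻¹ • x := by
  induction k with
  | zero => simpa using hx
  | succ k ih =>
    refine nsmul_two_semiclosed ?_
    rwa [two_nsmul, ← add_smul, pow_succ, mul_inv, ← mul_two, mul_assoc,
      inv_mul_cancel₀ two_ne_zero, mul_one]

lemma abs_smul_of_nonneg [PosSMulMono ℝ F] {x : F} (hx : 0 ≤ x) (t : ℝ) : |t • x| = |t| • x := by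
  rcases le_total 0 t with ht | ht
  · rw [abs_of_nonneg ht, abs_of_nonneg (smul_nonneg ht hx)]
  · rw [abs_of_nonpos ht, ← abs_neg, ← neg_smul, abs_of_nonneg (smul_nonneg (neg_nonneg.2 ht) hx)]

end LatticeOrderedModule

section PositiveFunctional

variable {F : Type*} [AddCommGroup F] [Lattice F] [IsOrderedAddMonoid F]
  {G : Type*} [FunLike G F ℝ] [AddMonoidHomClass G F ℝ] {f : G}

lemma apply_mono_of_apply_nonneg (hf : ∀ z, 0 ≤ z → 0 ≤ f z) {x y : F} (h : x ≤ y) :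
    f x ≤ f y := by
  simpa [map_sub] using hf _ (sub_nonneg.2 h)

lemma abs_apply_le_apply_abs (hf : ∀ z, 0 ≤ z → 0 ≤ f z) (y : F) : |f y| ≤ f |y| :=
  abs_le'.2 ⟨apply_mono_of_apply_nonneg hf (le_abs_self y),
    by simpa using apply_mono_of_apply_nonneg hf (neg_le_abs y)⟩

end PositiveFunctional

section SolidNorm

variable {F : Type*} [NormedAddCommGroup F] [Lattice F] [IsOrderedAddMonoid F] [HasSolidNorm F]

lemma norm_le_norm_of_nonneg_of_le {x y : F} (hx : 0 ≤ x) (h : x ≤ y) : ‖x‖ ≤ ‖y‖ :=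
  norm_le_norm_of_abs_le_abs <| by rwa [abs_of_nonneg hx, abs_of_nonneg (hx.trans h)]

variable [NormedSpace ℝ F]

-- Dyadic multiples of `x` are positive by `nsmul_two_semiclosed`, and the positive cone is closed.
lemma HasSolidNorm.smul_nonneg {c : ℝ} (hc : 0 ≤ c) {x : F} (hx : 0 ≤ x) : 0 ≤ c • x := by
  have hdyadic : Tendsto (fun k : ℕ ↦ (⌊c * 2 ^ k⌋₊ : ℝ) / 2 ^ k) atTop (𝓝 c) :=
    (tendsto_nat_floor_mul_div_atTop hc).comp (tendsto_pow_atTop_atTop_of_one_lt one_lt_two)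
  refine isClosed_nonneg.mem_of_tendsto (hdyadic.smul_const x) (.of_forall fun k ↦ ?_)
  rw [Set.mem_ofPred_eq, div_eq_mul_inv, ← smul_smul, Nat.cast_smul_eq_nsmul]
  exact nsmul_nonneg (inv_two_pow_smul_nonneg hx k) _

instance HasSolidNorm.isOrderedModule : IsOrderedModule ℝ F :=
  .of_smul_nonneg fun _ hc _ hx ↦ HasSolidNorm.smul_nonneg hc hx

lemma norm_add_smul_le_norm_abs_add {x : F} (hx : 0 ≤ x) {t : ℝ} (ht : |t| ≤ 1) (y : F) :
    ‖y + t • x‖ ≤ ‖|y| + x‖ := by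
  refine norm_le_norm_of_abs_le_abs ?_
  calc |y + t • x| ≤ |y| + |t| • x := by
        simpa only [abs_smul_of_nonneg hx] using abs_add_le y (t • x)
    _ ≤ |y| + x := by gcongr; exact smul_le_of_le_one_left hx ht
    _ = |(|y| + x)| := (abs_of_nonneg (add_nonneg (abs_nonneg y) hx)).symm

lemma exists_nonneg_norm_eq_one_le {x : F} (hx : 0 ≤ x) (hx₀ : x ≠ 0) (hx₁ : ‖x‖ ≤ 1) :
    ∃ b, 0 ≤ b ∧ ‖b‖ = 1 ∧ x ≤ b :=
  ⟨‖x‖⁻¹ • x, smul_nonneg (by positivity) hx, norm_smul_inv_norm hx₀,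
    le_smul_of_one_le_left hx ((one_le_inv₀ (norm_pos_iff.2 hx₀)).2 hx₁)⟩

lemma exists_sphere_of_lt_norm_id_add_smulRight {a : F} (ha : 0 ≤ a) (hna : ‖a‖ = 1)
    {f : F →L[ℝ] ℝ} (hf : ∀ z, 0 ≤ z → 0 ≤ f z) (hnf : ‖f‖ ≤ 1) {ε : ℝ} (hε : ε < 1)
    (h : 2 - ε < ‖ContinuousLinearMap.id ℝ F + f.smulRight a‖) :
    ∃ b, 0 ≤ b ∧ ‖b‖ = 1 ∧ 1 - ε ≤ f b ∧ 2 - ε ≤ ‖a + b‖ := by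
  obtain ⟨y, hy, hTy⟩ := exists_lt_apply_of_lt_opNorm _ h
  simp only [add_apply, coe_id', id_eq, smulRight_apply] at hTy
  have hfy : |f y| ≤ 1 := by
    simpa using f.le_of_opNorm_le_of_le hnf hy.le
  have hTy_le : ‖y + f y • a‖ ≤ ‖y‖ + |f y| := by
    simpa [norm_smul, hna] using norm_add_le y (f y • a)
  have hfy_abs : 1 - ε < f |y| := by linarith [abs_apply_le_apply_abs hf y]
  have hy_abs : 2 - ε < ‖a + |y|‖ := by
    rw [add_comm]; exact hTy.trans_le (norm_add_smul_le_norm_abs_add ha hfy y)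
  have hy₀ : |y| ≠ 0 := by
    rintro hy₀; rw [hy₀, map_zero] at hfy_abs; linarith
  obtain ⟨b, hb, hnb, hyb⟩ :=
    exists_nonneg_norm_eq_one_le (abs_nonneg y) hy₀ ((norm_abs_eq_norm y).trans_le hy.le)
  exact ⟨b, hb, hnb, hfy_abs.le.trans (apply_mono_of_apply_nonneg hf hyb),
    hy_abs.le.trans (norm_le_norm_of_nonneg_of_le (add_nonneg ha (abs_nonneg y)) (by gcongr))⟩

end SolidNorm

section NormedSpace

variable {E : Type*} [NormedAddCommGroup E] [NormedSpace ℝ E]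

lemma ContinuousLinearMap.apply_le_norm_of_opNorm_le_one {g : E →L[ℝ] ℝ} (hg : ‖g‖ ≤ 1)
    (z : E) : g z ≤ ‖z‖ :=
  (le_abs_self _).trans (by simpa using g.le_of_opNorm_le_of_le hg le_rfl)

lemma exists_dual_le_apply_of_two_sub_le_norm_add {x y : E} {ε : ℝ} (hx : ‖x‖ ≤ 1)
    (hy : ‖y‖ ≤ 1) (h : 2 - ε ≤ ‖x + y‖) :
    ∃ g : E →L[ℝ] ℝ, ‖g‖ ≤ 1 ∧ 1 - ε ≤ g x ∧ 1 - ε ≤ g y := by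
  obtain ⟨g, hg, hgxy⟩ := exists_dual_vector'' ℝ (x + y)
  simp only [map_add, RCLike.ofReal_real_eq_id, id_eq] at hgxy
  exact ⟨g, hg, by linarith [g.apply_le_norm_of_opNorm_le_one hg y],
    by linarith [g.apply_le_norm_of_opNorm_le_one hg x]⟩

lemma one_sub_two_mul_mul_le_norm_id_add_smul_smulRight {a b : E} {f : E →L[ℝ] ℝ} {ε c : ℝ}
    (ha : ‖a‖ ≤ 1) (hb : ‖b‖ = 1) (hc : 0 ≤ c) (hε₀ : 0 ≤ ε) (hε₁ : ε ≤ 1) (hfb : 1 - ε ≤ f b)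
    (hab : 2 - ε ≤ ‖a + b‖) :
    (1 - 2 * ε) * (1 + c) ≤ ‖ContinuousLinearMap.id ℝ E + c • f.smulRight a‖ := by
  obtain ⟨g, hg, hga, hgb⟩ := exists_dual_le_apply_of_two_sub_le_norm_add ha hb.le hab
  have hprod : (1 - ε) * (1 - ε) ≤ f b * g a := mul_le_mul hfb hga (by linarith) (by linarith)
  calc (1 - 2 * ε) * (1 + c) ≤ (1 - ε) + c * ((1 - ε) * (1 - ε)) := by
        nlinarith [mul_nonneg hc (sq_nonneg ε)]
    _ ≤ g b + c * (f b * g a) := by gcongr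
    _ = g ((ContinuousLinearMap.id ℝ E + c • f.smulRight a) b) := by simp
    _ ≤ ‖(ContinuousLinearMap.id ℝ E + c • f.smulRight a) b‖ :=
        g.apply_le_norm_of_opNorm_le_one hg _
    _ ≤ ‖ContinuousLinearMap.id ℝ E + c • f.smulRight a‖ := by
        simpa [hb] using (ContinuousLinearMap.id ℝ E + c • f.smulRight a).le_opNorm b

lemma le_norm_id_add_smul_smulRight {a : E} {f : E →L[ℝ] ℝ} {c : ℝ} (ha : ‖a‖ ≤ 1) (hc : 0 ≤ c)
    (h : ∀ ε : ℝ, 0 < ε → ∃ b, ‖b‖ = 1 ∧ 1 - ε ≤ f b ∧ 2 - ε ≤ ‖a + b‖) :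
    1 + c ≤ ‖ContinuousLinearMap.id ℝ E + c • f.smulRight a‖ := by
  have hlim : Tendsto (fun ε : ℝ ↦ (1 - 2 * ε) * (1 + c)) (𝓝[>] 0) (𝓝 (1 + c)) := by
    have : Continuous fun ε : ℝ ↦ (1 - 2 * ε) * (1 + c) := by fun_prop
    simpa using (this.tendsto 0).mono_left nhdsWithin_le_nhds
  refine le_of_tendsto hlim ?_
  filter_upwards [Ioo_mem_nhdsGT one_pos] with ε ⟨hε₀, hε₁⟩
  obtain ⟨b, hb, hfb, hab⟩ := h ε hε₀
  exact one_sub_two_mul_mul_le_norm_id_add_smul_smulRight ha hb hc hε₀.le hε₁.le hfb hab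

lemma smulRight_eq_smul_smulRight_inv_norm_smul (f : E →L[ℝ] ℝ) (a : E) :
    f.smulRight a = (‖f‖ * ‖a‖) • (‖f‖⁻¹ • f).smulRight (‖a‖⁻¹ • a) := by
  rcases eq_or_ne f 0 with rfl | hf
  · simp
  rcases eq_or_ne a 0 with rfl | ha
  · simp
  ext z
  simp only [smulRight_apply, FunLike.coe_smul, Pi.smul_apply, smul_eq_mul, smul_smul]
  congr 1
  field_simp

end NormedSpace

theorem positiveDaugavetProperty_iff_sphere_criterion_general
    {F : Type*} [NormedAddCommGroup F] [Lattice F] [IsOrderedAddMonoid F] [HasSolidNorm F] [NormedSpace ℝ F] :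
    (∀ (f : F →L[ℝ] ℝ) (a : F), 0 ≤ a → a ≠ 0 → f ≠ 0 → (∀ z : F, 0 ≤ z → 0 ≤ f z) →
        ‖ContinuousLinearMap.id ℝ F + f.smulRight a‖ = 1 + ‖f.smulRight a‖) ↔
    (∀ a : F, 0 ≤ a → ‖a‖ = 1 → ∀ f : F →L[ℝ] ℝ, (∀ z : F, 0 ≤ z → 0 ≤ f z) → ‖f‖ = 1 →
        ∀ ε : ℝ, 0 < ε →
        ∃ b : F, 0 ≤ b ∧ ‖b‖ = 1 ∧ 1 - ε ≤ f b ∧ 2 - ε ≤ ‖a + b‖) := by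
  constructor
  · intro H a ha hna f hf hnf ε hε
    have hδ : 0 < min ε (1 / 2) := lt_min hε one_half_pos
    have hlt : 2 - min ε (1 / 2) < ‖ContinuousLinearMap.id ℝ F + f.smulRight a‖ := by
      rw [H f a ha (norm_ne_zero_iff.1 (by simp [hna])) (norm_ne_zero_iff.1 (by simp [hnf])) hf,
        norm_smulRight_apply, hnf, hna]
      linarith
    obtain ⟨b, hb, hnb, hfb, hab⟩ := exists_sphere_of_lt_norm_id_add_smulRight ha hna hf hnf.le
      ((min_le_right _ _).trans_lt one_half_lt_one) hlt
    exact ⟨b, hb, hnb, by linarith [min_le_left ε (1 / 2)], by linarith [min_le_left ε (1 / 2)]⟩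
  · intro H f a ha ha₀ hf₀ hf
    refine le_antisymm ((norm_add_le _ _).trans (by gcongr; exact norm_id_le)) ?_
    rw [norm_smulRight_apply, smulRight_eq_smul_smulRight_inv_norm_smul f a]
    have hf' : ∀ z : F, 0 ≤ z → 0 ≤ (‖f‖⁻¹ • f) z := fun z hz ↦
      mul_nonneg (by positivity) (hf z hz)
    refine le_norm_id_add_smul_smulRight (norm_smul_inv_norm ha₀).le (by positivity) fun ε hε ↦ ?_
    obtain ⟨b, -, hb⟩ := H _ (smul_nonneg (inv_nonneg.2 (norm_nonneg a)) ha)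
      (norm_smul_inv_norm ha₀) _ hf' (norm_smul_inv_norm hf₀) ε hε
    exact ⟨b, hb⟩

/-- A nonzero Banach lattice `F` has the *positive Daugavet property* (every positive
rank-one operator `z ↦ f z • a` satisfies `‖Id + T‖ = 1 + ‖T‖`) iff for every positive
`a` in the unit sphere, every positive norm-one functional `f` and every `ε > 0` there
is a positive `b` in the unit sphere with `f b ≥ 1 - ε` and `‖a + b‖ ≥ 2 - ε`. -/
theorem positiveDaugavetProperty_iff_sphere_criterion
    {F : Type*} [NormedAddCommGroup F] [Lattice F] [IsOrderedAddMonoid F] [HasSolidNorm F] [NormedSpace ℝ F] [CompleteSpace F]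
    [Nontrivial F] :
    (∀ (f : F →L[ℝ] ℝ) (a : F), 0 ≤ a → a ≠ 0 → f ≠ 0 → (∀ z : F, 0 ≤ z → 0 ≤ f z) →
        ‖ContinuousLinearMap.id ℝ F + f.smulRight a‖ = 1 + ‖f.smulRight a‖) ↔
    (∀ a : F, 0 ≤ a → ‖a‖ = 1 → ∀ f : F →L[ℝ] ℝ, (∀ z : F, 0 ≤ z → 0 ≤ f z) → ‖f‖ = 1 →
        ∀ ε : ℝ, 0 < ε →
        ∃ b : F, 0 ≤ b ∧ ‖b‖ = 1 ∧ 1 - ε ≤ f b ∧ 2 - ε ≤ ‖a + b‖) :=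
  positiveDaugavetProperty_iff_sphere_criterion_general
end

section
/- Let N be a 1-unconditional norm on ℝ² with N(1, 0) = N(0, 1) = 1, let X₁ and X₂ be nonzero Banach spaces, and let X be the product X₁ × X₂ equipped with a complete norm satisfying ‖(x₁, x₂)‖ = N(‖x₁‖, ‖x₂‖). If X has the Daugavet property, then either N(a₁, a₂) = |a₁| + |a₂| for all (a₁, a₂) ∈ ℝ², or N(a₁, a₂) = max{|a₁|, |a₂|} for all (a₁, a₂) ∈ ℝ². -/
/-- A Banach space `X` has the *Daugavet property* if every rank-one operator
`z ↦ f z • y` (with `f ≠ 0`, `y ≠ 0`) satisfies `‖Id + T‖ = 1 + ‖T‖`. -/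
def DaugavetProperty (X : Type*) [NormedAddCommGroup X] [NormedSpace ℝ X] : Prop :=
  ∀ (f : X →L[ℝ] ℝ) (y : X), f ≠ 0 → y ≠ 0 →
    ‖ContinuousLinearMap.id ℝ X + f.smulRight y‖ = 1 + ‖f.smulRight y‖

/-!
Write `f t = N (1, t)`; it is nondecreasing and `1`-Lipschitz on `[0, ∞)` with `f 0 = 1`.
Testing the Daugavet equation on `z ↦ x*(z₁) • (0, d • v)`, where `x*` norms a unit vector
of `X₁` and `v` is a unit vector of `X₂`, yields for every `d > 0` points `t ≥ 0` with `f t`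
almost `1` and `f (t + d)` almost `1 + d`. Hence `f (b + d) = 1 + d` for all `d ≥ 0`, where
`b` is the largest point with `f b = 1`; symmetrically `N (a + d, 1) = 1 + d` for some `a`.
If `N (1, 1) ≤ 1`, then `N` is the max norm. Otherwise `a < 1`, and homogeneity,
`N (1, b) = b * N (b⁻¹, 1)`, forces `b = 0`: then `N (1, t) = 1 + t`, which is the `ℓ¹` norm.
-/

namespace Seminorm

variable (N : Seminorm ℝ (ℝ × ℝ))

def prodSwap : Seminorm ℝ (ℝ × ℝ) := N.comp (LinearEquiv.prodComm ℝ ℝ ℝ).toLinearMap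

@[simp]
lemma prodSwap_apply (a : ℝ × ℝ) : N.prodSwap a = N a.swap := rfl

variable {N}

lemma apply_mul_mul (c x y : ℝ) : N (c * x, c * y) = |c| * N (x, y) := by
  rw [← smul_eq_mul, ← smul_eq_mul c y, ← Prod.smul_mk, map_smul_eq_mul, Real.norm_eq_abs]

lemma apply_fst_add_le (h10 : N (1, 0) = 1) (x y c : ℝ) : N (x + c, y) ≤ N (x, y) + |c| := by
  calc N (x + c, y) = N ((x, y) + c • (1, 0)) := by simp
    _ ≤ N (x, y) + |c| := by grw [map_add_le_add, map_smul_eq_mul, Real.norm_eq_abs, h10, mul_one]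

lemma apply_snd_add_le (h01 : N (0, 1) = 1) (x y c : ℝ) : N (x, y + c) ≤ N (x, y) + |c| := by
  simpa using N.prodSwap.apply_fst_add_le h01 y x c

lemma apply_mk_zero (h10 : N (1, 0) = 1) (c : ℝ) : N (c, 0) = |c| := by
  simpa [h10] using apply_mul_mul (N := N) c 1 0

lemma apply_zero_mk (h01 : N (0, 1) = 1) (c : ℝ) : N (0, c) = |c| := by
  simpa [h01] using apply_mul_mul (N := N) c 0 1

lemma prodSwap_absolute (hN : ∀ a : ℝ × ℝ, N a = N (|a.1|, |a.2|)) (a : ℝ × ℝ) :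
    N.prodSwap a = N.prodSwap (|a.1|, |a.2|) := by
  simpa using hN a.swap

lemma apply_le_apply_of_abs_fst_le (hN : ∀ a : ℝ × ℝ, N a = N (|a.1|, |a.2|)) {x x' : ℝ}
    (y : ℝ) (hx : |x| ≤ |x'|) : N (x, y) ≤ N (x', y) := by
  have hseg : (x, y) ∈ segment ℝ (-|x'|, y) (|x'|, y) := by
    rw [← Prod.image_mk_segment_left, segment_eq_Icc (by simp)]
    exact ⟨x, abs_le.mp hx, rfl⟩
  have habs : ∀ z, N (z, y) = N (|z|, y) := fun z => by rw [hN, hN (|z|, y)]; simp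
  calc N (x, y) ≤ max (N (-|x'|, y)) (N (|x'|, y)) :=
        N.convexOn.le_on_segment (Set.mem_univ _) (Set.mem_univ _) hseg
    _ = N (x', y) := by rw [habs (-|x'|), habs x']; simp

lemma apply_le_apply_of_abs_le (hN : ∀ a : ℝ × ℝ, N a = N (|a.1|, |a.2|)) {x x' y y' : ℝ}
    (hx : |x| ≤ |x'|) (hy : |y| ≤ |y'|) : N (x, y) ≤ N (x', y') :=
  (apply_le_apply_of_abs_fst_le hN y hx).trans <| by
    simpa using apply_le_apply_of_abs_fst_le (prodSwap_absolute hN) x' hy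

lemma abs_fst_le_apply (hN : ∀ a : ℝ × ℝ, N a = N (|a.1|, |a.2|)) (h10 : N (1, 0) = 1)
    (x y : ℝ) : |x| ≤ N (x, y) := by
  simpa [apply_mk_zero h10] using
    apply_le_apply_of_abs_le hN (le_refl |x|) (by simp : |(0 : ℝ)| ≤ |y|)

lemma abs_snd_le_apply (hN : ∀ a : ℝ × ℝ, N a = N (|a.1|, |a.2|)) (h01 : N (0, 1) = 1)
    (x y : ℝ) : |y| ≤ N (x, y) := by
  simpa using abs_fst_le_apply (prodSwap_absolute hN) h01 y x

lemma eq_max_abs_of_apply_one_one_le (hN : ∀ a : ℝ × ℝ, N a = N (|a.1|, |a.2|))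
    (h10 : N (1, 0) = 1) (h01 : N (0, 1) = 1) (h11 : N (1, 1) ≤ 1) (a : ℝ × ℝ) :
    N a = max |a.1| |a.2| := by
  set m := max |a.1| |a.2|
  have hm : 0 ≤ m := (abs_nonneg _).trans (le_max_left _ _)
  refine le_antisymm ?_ (max_le (abs_fst_le_apply hN h10 _ _) (abs_snd_le_apply hN h01 _ _))
  calc N a ≤ N (m * 1, m * 1) :=
        apply_le_apply_of_abs_le hN (by simp [m, abs_of_nonneg hm])
          (by simp [m, abs_of_nonneg hm])
    _ = m * N (1, 1) := by rw [apply_mul_mul, abs_of_nonneg hm]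
    _ ≤ m := mul_le_of_le_one_right hm h11

lemma eq_abs_add_abs_of_apply_one (hN : ∀ a : ℝ × ℝ, N a = N (|a.1|, |a.2|))
    (h01 : N (0, 1) = 1) (h : ∀ d ≥ 0, N (1, d) = 1 + d) (a : ℝ × ℝ) :
    N a = |a.1| + |a.2| := by
  rw [hN]
  rcases (abs_nonneg a.1).eq_or_lt with hx | hx
  · rw [← hx, apply_zero_mk h01, abs_abs, zero_add]
  · calc N (|a.1|, |a.2|) = N (|a.1| * 1, |a.1| * (|a.2| / |a.1|)) := by
          rw [mul_one, mul_div_cancel₀ _ hx.ne']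
      _ = |a.1| + |a.2| := by
          rw [apply_mul_mul, h _ (by positivity), abs_abs, mul_add, mul_one,
            mul_div_cancel₀ _ hx.ne']

lemma exists_apply_one_add_eq (hN : ∀ a : ℝ × ℝ, N a = N (|a.1|, |a.2|))
    (h10 : N (1, 0) = 1) (h01 : N (0, 1) = 1)
    (hK : ∀ d > 0, ∀ ε > 0, ∃ t ≥ 0, N (1, t) ≤ 1 + ε ∧ 1 + d - ε ≤ N (1, t + d)) :
    ∃ b ≥ 0, ∀ d ≥ 0, N (1, b + d) = 1 + d := by
  have hmono : ∀ t t', 0 ≤ t → t ≤ t' → N (1, t) ≤ N (1, t') := fun t t' ht htt' =>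
    apply_le_apply_of_abs_le hN le_rfl (abs_le_abs_of_nonneg ht htt')
  set S := {t : ℝ | 0 ≤ t ∧ N (1, t) ≤ 1}
  have hS0 : (0 : ℝ) ∈ S := ⟨le_rfl, h10.le⟩
  have hSbdd : BddAbove S :=
    ⟨1, fun t ht => (le_abs_self t).trans ((abs_snd_le_apply hN h01 1 t).trans ht.2)⟩
  set b := sSup S
  have hb0 : 0 ≤ b := le_csSup hSbdd hS0
  have hb : N (1, b) ≤ 1 := by
    refine le_of_forall_pos_le_add fun η hη => ?_
    obtain ⟨t, ⟨ht0, ht⟩, hbt⟩ := exists_lt_of_lt_csSup ⟨0, hS0⟩ (sub_lt_self b hη)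
    have htb : t ≤ b := le_csSup hSbdd ⟨ht0, ht⟩
    calc N (1, b) = N (1, t + (b - t)) := by rw [add_sub_cancel]
      _ ≤ 1 + η := by grw [apply_snd_add_le h01, ht, abs_of_nonneg (sub_nonneg.2 htb)]; linarith
  have hgap : ∀ η > 0, 1 < N (1, b + η) := fun η hη => by
    by_contra! h
    exact (lt_add_of_pos_right b hη).not_ge (le_csSup hSbdd ⟨by linarith, h⟩)
  refine ⟨b, hb0, fun d hd => le_antisymm ?_ ?_⟩
  · grw [apply_snd_add_le h01, hb, abs_of_nonneg hd]
  rcases hd.eq_or_lt with rfl | hd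
  · simpa [h10] using hmono 0 b le_rfl hb0
  refine le_of_forall_pos_le_add fun η hη => ?_
  have hgap' := hgap _ (half_pos hη)
  set ε := min ((N (1, b + η / 2) - 1) / 2) (η / 2)
  have hε : 0 < ε := lt_min (by linarith) (half_pos hη)
  have hε₁ : ε ≤ (N (1, b + η / 2) - 1) / 2 := min_le_left _ _
  have hε₂ : ε ≤ η / 2 := min_le_right _ _
  obtain ⟨t, ht0, ht, htd⟩ := hK d hd ε hε
  have htb : t ≤ b + η / 2 := by
    by_contra! h
    linarith [hmono _ _ (by positivity) h.le]
  calc 1 + d ≤ N (1, t + d) + η / 2 := by linarith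
    _ ≤ N (1, b + d + η / 2) + η / 2 := by
      grw [hmono _ (b + d + η / 2) (by positivity) (by linarith)]
    _ ≤ N (1, b + d) + η := by
      grw [apply_snd_add_le h01, abs_of_pos (half_pos hη)]; linarith

lemma exists_apply_one_le_of_exists_apply_mul_gt (hN : ∀ a : ℝ × ℝ, N a = N (|a.1|, |a.2|))
    (h10 : N (1, 0) = 1) (h01 : N (0, 1) = 1)
    (h : ∀ d > 0, ∀ ε > 0,
      ∃ s t : ℝ, 0 ≤ s ∧ 0 ≤ t ∧ N (s, t) ≤ 1 ∧ 1 + d - ε < N (s, t + s * d))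
    (d : ℝ) (hd : 0 < d) (ε : ℝ) (hε : 0 < ε) :
    ∃ t ≥ 0, N (1, t) ≤ 1 + ε ∧ 1 + d - ε ≤ N (1, t + d) := by
  obtain ⟨s, t, hs0, ht0, hst, hlt⟩ := h d hd (min ε (ε * d)) (lt_min hε (mul_pos hε hd))
  have hs1 : s ≤ 1 := by simpa [abs_of_nonneg hs0] using (abs_fst_le_apply hN h10 s t).trans hst
  -- the second coordinate can grow by at most `s * d`, which forces `s` to be nearly `1`
  have hsd : d - ε * d < s * d := by
    have := apply_snd_add_le h01 s t (s * d)
    rw [abs_of_nonneg (by positivity)] at this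
    linarith [min_le_right ε (ε * d)]
  have hs : 1 - s < ε := by nlinarith
  refine ⟨t, ht0, ?_, ?_⟩
  · calc N (1, t) = N (s + (1 - s), t) := by rw [add_sub_cancel]
      _ ≤ 1 + ε := by grw [apply_fst_add_le h10, hst, abs_of_nonneg (sub_nonneg.2 hs1)]; linarith
  · calc 1 + d - ε ≤ N (s, t + s * d) := by linarith [min_le_left ε (ε * d)]
      _ ≤ N (1, t + d) := apply_le_apply_of_abs_le hN (by simp [abs_of_nonneg hs0, hs1])
          (abs_le_abs_of_nonneg (by positivity) (by nlinarith))

lemma eq_zero_of_apply_one_eq_one (hN : ∀ a : ℝ × ℝ, N a = N (|a.1|, |a.2|))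
    (h01 : N (0, 1) = 1) (h11 : 1 < N (1, 1)) {α β : ℝ}
    (hα : ∀ d ≥ 0, N (α + d, 1) = 1 + d) (hβ0 : 0 ≤ β) (hβ : N (1, β) = 1) :
    β = 0 := by
  have hα1 : α < 1 := by
    by_contra! h
    have := apply_le_apply_of_abs_le hN (x := 1) (x' := α) (y := 1)
      (by rwa [abs_one, abs_of_pos (by linarith)]) le_rfl
    linarith [show N (α, 1) = 1 by simpa using hα 0 le_rfl]
  rcases hβ0.eq_or_lt with rfl | hβ0
  · rfl
  have hβ1 : β ≤ 1 := by simpa [abs_of_pos hβ0, hβ] using abs_snd_le_apply hN h01 1 β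
  have hαβ : 0 ≤ β⁻¹ - α := by linarith [one_le_inv_iff₀.2 ⟨hβ0, hβ1⟩]
  have : N (1, β) = β * (1 + (β⁻¹ - α)) := by
    rw [← hα _ hαβ, add_sub_cancel, ← abs_of_pos hβ0, ← apply_mul_mul, abs_of_pos hβ0,
      mul_inv_cancel₀ hβ0.ne', mul_one]
  rw [hβ, mul_add, mul_sub, mul_inv_cancel₀ hβ0.ne'] at this
  nlinarith [mul_pos hβ0 (sub_pos.2 hα1)]

end Seminorm

open Seminorm

theorem DaugavetProperty.exists_apply_le_one_lt_apply_snd_add_mul {N : Seminorm ℝ (ℝ × ℝ)}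
    (hN : ∀ a : ℝ × ℝ, N a = N (|a.1|, |a.2|)) (h10 : N (1, 0) = 1) (h01 : N (0, 1) = 1)
    {X₁ X₂ V : Type*} [NormedAddCommGroup X₁] [NormedSpace ℝ X₁] [Nontrivial X₁]
    [NormedAddCommGroup X₂] [NormedSpace ℝ X₂] [Nontrivial X₂]
    [NormedAddCommGroup V] [NormedSpace ℝ V] (e : V ≃ₗ[ℝ] X₁ × X₂)
    (hnorm : ∀ v : V, ‖v‖ = N (‖(e v).1‖, ‖(e v).2‖)) (hV : DaugavetProperty V)
    (d : ℝ) (hd : 0 < d) (ε : ℝ) (hε : 0 < ε) :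
    ∃ s t : ℝ, 0 ≤ s ∧ 0 ≤ t ∧ N (s, t) ≤ 1 ∧ 1 + d - ε < N (s, t + s * d) := by
  obtain ⟨u, hu⟩ := exists_norm_eq X₁ zero_le_one
  obtain ⟨v, hv⟩ := exists_norm_eq X₂ zero_le_one
  obtain ⟨f, hf, hfu⟩ := exists_dual_vector ℝ u (by simp [hu])
  have hfx : ∀ x, |f x| ≤ ‖x‖ := fun x => by simpa [hf] using f.le_opNorm x
  have hfst : ∀ z : V, ‖(e z).1‖ ≤ ‖z‖ := fun z => by
    simpa [hnorm] using abs_fst_le_apply hN h10 ‖(e z).1‖ ‖(e z).2‖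
  let F : V →L[ℝ] ℝ :=
    (f.toLinearMap ∘ₗ LinearMap.fst ℝ X₁ X₂ ∘ₗ e.toLinearMap).mkContinuous 1
      fun z => by simpa using (hfx _).trans (hfst z)
  have hF : ∀ z, F z = f (e z).1 := fun _ => rfl
  let y := e.symm (0, d • v)
  let z₀ := e.symm (u, 0)
  have hy : ‖y‖ = d := by simp [y, hnorm, norm_smul, hv, apply_zero_mk h01, abs_of_pos hd]
  have hz₀ : ‖z₀‖ = 1 := by simp [z₀, hnorm, hu, apply_mk_zero h10]
  have hFz₀ : F z₀ = 1 := by simp [hF, z₀, hfu, hu]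
  have hT : d ≤ ‖F.smulRight y‖ := by
    simpa [hFz₀, hy, hz₀] using (F.smulRight y).le_opNorm z₀
  have hdaug := hV F y (fun h => by simp [h] at hFz₀) (fun h => by simp [h] at hy; linarith)
  obtain ⟨z, hz, hlt⟩ :=
    (ContinuousLinearMap.id ℝ V + F.smulRight y).exists_lt_apply_of_lt_opNorm
      (r := 1 + d - ε) (by rw [hdaug]; linarith)
  refine ⟨‖(e z).1‖, ‖(e z).2‖, norm_nonneg _, norm_nonneg _,
    by rw [← hnorm]; exact hz.le, hlt.trans_le ?_⟩
  have hez : e (z + F z • y) = ((e z).1, (e z).2 + (F z * d) • v) := by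
    ext <;> simp [y, mul_smul]
  have hsnd : ‖(e z).2 + (F z * d) • v‖ ≤ ‖(e z).2‖ + ‖(e z).1‖ * d := by
    grw [norm_add_le, norm_smul, hv, Real.norm_eq_abs, abs_mul, abs_of_pos hd, hF, hfx]; simp
  calc ‖(ContinuousLinearMap.id ℝ V + F.smulRight y) z‖ = ‖z + F z • y‖ := rfl
    _ ≤ N (‖(e z).1‖, ‖(e z).2‖ + ‖(e z).1‖ * d) := by
      rw [hnorm, hez]
      exact apply_le_apply_of_abs_le hN le_rfl
        (abs_le_abs_of_nonneg (norm_nonneg _) hsnd)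

theorem DaugavetProperty.exists_apply_one_add_eq {N : Seminorm ℝ (ℝ × ℝ)}
    (hN : ∀ a : ℝ × ℝ, N a = N (|a.1|, |a.2|)) (h10 : N (1, 0) = 1) (h01 : N (0, 1) = 1)
    {X₁ X₂ V : Type*} [NormedAddCommGroup X₁] [NormedSpace ℝ X₁] [Nontrivial X₁]
    [NormedAddCommGroup X₂] [NormedSpace ℝ X₂] [Nontrivial X₂]
    [NormedAddCommGroup V] [NormedSpace ℝ V] (e : V ≃ₗ[ℝ] X₁ × X₂)
    (hnorm : ∀ v : V, ‖v‖ = N (‖(e v).1‖, ‖(e v).2‖)) (hV : DaugavetProperty V) :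
    ∃ b ≥ 0, ∀ d ≥ 0, N (1, b + d) = 1 + d :=
  Seminorm.exists_apply_one_add_eq hN h10 h01 <|
    exists_apply_one_le_of_exists_apply_mul_gt hN h10 h01
      (hV.exists_apply_le_one_lt_apply_snd_add_mul hN h10 h01 e hnorm)

theorem unconditionalSum_daugavet_implies_one_or_infty_general
    (N : Seminorm ℝ (ℝ × ℝ))
    (hNuncond : ∀ a : ℝ × ℝ, N a = N (|a.1|, |a.2|))
    (hN10 : N (1, 0) = 1) (hN01 : N (0, 1) = 1)
    (X₁ X₂ : Type*)
    [NormedAddCommGroup X₁] [NormedSpace ℝ X₁] [Nontrivial X₁]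
    [NormedAddCommGroup X₂] [NormedSpace ℝ X₂] [Nontrivial X₂]
    (V : Type*) [NormedAddCommGroup V] [NormedSpace ℝ V]
    (e : V ≃ₗ[ℝ] X₁ × X₂)
    (hnorm : ∀ v : V, ‖v‖ = N (‖(e v).1‖, ‖(e v).2‖))
    (hV : DaugavetProperty V) :
    (∀ a : ℝ × ℝ, N a = |a.1| + |a.2|) ∨ (∀ a : ℝ × ℝ, N a = max |a.1| |a.2|) := by
  rcases le_or_gt (N (1, 1)) 1 with h11 | h11
  · exact Or.inr (eq_max_abs_of_apply_one_one_le hNuncond hN10 hN01 h11)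
  obtain ⟨β, hβ0, hβ⟩ := hV.exists_apply_one_add_eq hNuncond hN10 hN01 e hnorm
  obtain ⟨α, -, hα⟩ := hV.exists_apply_one_add_eq (prodSwap_absolute hNuncond) hN01 hN10
    (e.trans (LinearEquiv.prodComm ℝ X₁ X₂)) fun v => by simpa using hnorm v
  obtain rfl : β = 0 := eq_zero_of_apply_one_eq_one hNuncond hN01 h11
    (fun d hd => by simpa using hα d hd) hβ0 (by simpa using hβ 0 le_rfl)
  exact Or.inl (eq_abs_add_abs_of_apply_one hNuncond hN01 (by simpa using hβ))

/-- If `N` is a `1`-unconditional norm on `ℝ²` with `N (1,0) = N (0,1) = 1`, `X₁, X₂`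
are nonzero Banach spaces and the `N`-sum `X` of `X₁` and `X₂` (the product `X₁ × X₂`
with the complete norm `‖(x₁, x₂)‖ = N (‖x₁‖, ‖x₂‖)`) has the Daugavet property, then
`N` is either the `ℓ¹`-norm or the `ℓ∞`-norm on `ℝ²`. -/
theorem unconditionalSum_daugavet_implies_one_or_infty
    (N : Seminorm ℝ (ℝ × ℝ))
    (hNdef : ∀ a : ℝ × ℝ, N a = 0 → a = 0)
    (hNuncond : ∀ a : ℝ × ℝ, N a = N (|a.1|, |a.2|))
    (hN10 : N (1, 0) = 1) (hN01 : N (0, 1) = 1)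
    (X₁ X₂ : Type*)
    [NormedAddCommGroup X₁] [NormedSpace ℝ X₁] [CompleteSpace X₁] [Nontrivial X₁]
    [NormedAddCommGroup X₂] [NormedSpace ℝ X₂] [CompleteSpace X₂] [Nontrivial X₂]
    (V : Type*) [NormedAddCommGroup V] [NormedSpace ℝ V] [CompleteSpace V]
    (e : V ≃ₗ[ℝ] X₁ × X₂)
    (hnorm : ∀ v : V, ‖v‖ = N (‖(e v).1‖, ‖(e v).2‖))
    (hV : DaugavetProperty V) :
    (∀ a : ℝ × ℝ, N a = |a.1| + |a.2|) ∨ (∀ a : ℝ × ℝ, N a = max |a.1| |a.2|) :=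
  unconditionalSum_daugavet_implies_one_or_infty_general N hNuncond hN10 hN01 X₁ X₂ V e hnorm hV
end
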